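/- Let n, r, s, t be positive integers and α = ν_2(n). Then in ℤ[q], ∑_{k=-n}^{n} (-1)^k q^{C(k,2)} [6n choose 3n+k]_q^r [4n choose 2n+k]_q^s [2n choose n+k]_q^t is divisible by Φ_{2^{α+1}}(q)^2 = (1 + q^{2^α})^2. -/
import Mathlib


open Finset Polynomial

/-- The Gaussian (q-)binomial coefficient as a polynomial in `ℤ[q]`,
defined by the q-Pascal recurrence. -/
noncomputable def qbinom : ℕ → ℕ → Polynomial ℤ
  | _, 0 => 1
  | 0, _ + 1 => 0
  | n + 1, k + 1 => qbinom n k + X ^ (k + 1) * qbinom n (k + 1)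

/-- Gaussian binomial with an integer lower argument, zero when it is negative. -/
noncomputable def qbinomZ (n : ℕ) (k : ℤ) : Polynomial ℤ := if 0 ≤ k then qbinom n k.toNat else 0

lemma qbinom_zero_right (m : ℕ) : qbinom m 0 = 1 := by cases m <;> rfl

lemma qbinom_eq_zero_of_lt : ∀ {m b : ℕ}, m < b → qbinom m b = 0
  | 0, _ + 1, _ => rfl
  | m + 1, b + 1, h => by
    rw [qbinom, qbinom_eq_zero_of_lt (by omega), qbinom_eq_zero_of_lt (by omega)]
    ring

lemma qbinom_self : ∀ m : ℕ, qbinom m m = 1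
  | 0 => rfl
  | m + 1 => by
    rw [qbinom, qbinom_self m, qbinom_eq_zero_of_lt (by omega)]
    ring

/-- product of `X^i - 1`, i = 1..j -/
noncomputable def qfac (j : ℕ) : Polynomial ℤ := ∏ i ∈ Finset.range j, (X ^ (i + 1) - 1)

lemma qfac_succ (j : ℕ) : qfac (j + 1) = qfac j * (X ^ (j + 1) - 1) := Finset.prod_range_succ _ _

lemma qbinom_mul_qfac : ∀ m b : ℕ, b ≤ m → qbinom m b * (qfac b * qfac (m - b)) = qfac m
  | m, 0, _ => by simp [qbinom_zero_right, qfac]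
  | 0, b + 1, h => by omega
  | m + 1, b + 1, h => by
    rcases eq_or_lt_of_le h with h' | h' 
    · cases h'
      rw [qbinom_self]
      simp [qfac]
    · have hb : b ≤ m := by omega
      have hb1 : b + 1 ≤ m := by omega
      have e1 := qbinom_mul_qfac m b hb
      have e2 := qbinom_mul_qfac m (b + 1) hb1
      have h3 : m + 1 - (b + 1) = m - b := by omega
      have h4 : m - b = (m - (b + 1)) + 1 := by omega
      have f2 : qfac (m - b) = qfac (m - (b + 1)) * (X ^ (m - b) - 1) := by
        rw [h4, qfac_succ, ← h4]
      have f4 : (X : Polynomial ℤ) ^ (m + 1) = X ^ (b + 1) * X ^ (m - b) := by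
        rw [← pow_add]; congr 1; omega
      rw [f2] at e1
      rw [qfac_succ b] at e2
      rw [qbinom, h3, qfac_succ m, f4, qfac_succ b, f2]
      linear_combination (X ^ (b + 1) - 1) * e1 + X ^ (b + 1) * (X ^ (m - b) - 1) * e2

lemma qfac_ne_zero (j : ℕ) : qfac j ≠ 0 := by
  unfold qfac
  apply Finset.prod_ne_zero_iff.2
  intro i _
  intro h
  have := congrArg (Polynomial.eval 2) h
  simp at this
  have : (2:ℤ)^(i+1) ≥ 2^1 := pow_le_pow_right₀ (by norm_num) (by omega)
  omega

lemma qbinom_symm {m b : ℕ} (h : b ≤ m) : qbinom m b = qbinom m (m - b) := by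
  have e1 := qbinom_mul_qfac m b h
  have e2 := qbinom_mul_qfac m (m - b) (by omega)
  have h3 : m - (m - b) = b := by omega
  rw [h3] at e2
  have : qbinom m b * (qfac b * qfac (m - b)) = qbinom m (m - b) * (qfac b * qfac (m - b)) := by
    rw [e1, ← e2]; ring
  exact mul_right_cancel₀ (mul_ne_zero (qfac_ne_zero b) (qfac_ne_zero (m-b))) this

section cyc
variable {d : ℕ}

lemma cyc_dvd_X_pow_sub_one {i : ℕ} (h : d ∣ i) : cyclotomic d ℚ ∣ X ^ i - 1 := by
  obtain ⟨c, rfl⟩ := h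
  calc cyclotomic d ℚ ∣ X ^ d - 1 := cyclotomic.dvd_X_pow_sub_one d ℚ
    _ ∣ X ^ (d * c) - 1 := by
        have := sub_dvd_pow_sub_pow ((X : Polynomial ℚ) ^ d) 1 c
        rwa [← pow_mul, one_pow] at this

lemma cyc_not_dvd_X_pow_sub_one (hd : 0 < d) {i : ℕ} (h : ¬ d ∣ i) :
    ¬ cyclotomic d ℚ ∣ X ^ i - 1 := by
  intro hdvd
  apply h
  have hζ := Complex.isPrimitiveRoot_exp d hd.ne'
  have hmap : cyclotomic d ℂ ∣ X ^ i - 1 := by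
    have := Polynomial.map_dvd (algebraMap ℚ ℂ) hdvd
    rwa [map_cyclotomic, Polynomial.map_sub, Polynomial.map_pow, Polynomial.map_X,
      Polynomial.map_one] at this
  obtain ⟨c, hc⟩ := hmap
  have hroot : (cyclotomic d ℂ).eval (Complex.exp (2 * Real.pi * Complex.I / d)) = 0 :=
    (hζ.isRoot_cyclotomic hd)
  have : (Complex.exp (2 * Real.pi * Complex.I / d)) ^ i = 1 := by
    have := congrArg (Polynomial.eval (Complex.exp (2 * Real.pi * Complex.I / d))) hc
    simp [hroot] at this
    linear_combination this
  exact hζ.dvd_of_pow_eq_one i this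

lemma sf_X_pow_sub_one {i : ℕ} (hi : 0 < i) : Squarefree ((X : Polynomial ℚ) ^ i - 1) := by
  have := (separable_X_pow_sub_C (1 : ℚ) (Nat.cast_ne_zero.2 hi.ne') one_ne_zero).squarefree
  rwa [map_one] at this

lemma cyc_prime (hd : 0 < d) : Prime (cyclotomic d ℚ) :=
  (cyclotomic.irreducible_rat hd).prime

lemma qfac_decomp (hd : 0 < d) (j : ℕ) :
    ∃ g, (qfac j).map (Int.castRingHom ℚ) = cyclotomic d ℚ ^ (j / d) * g ∧
      ¬ cyclotomic d ℚ ∣ g := by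
  induction j with
  | zero =>
      refine ⟨1, by simp [qfac], fun h => (cyc_prime hd).not_unit (isUnit_of_dvd_one h)⟩
  | succ j ih =>
      obtain ⟨g, hg, hng⟩ := ih
      have hmap : (qfac (j + 1)).map (Int.castRingHom ℚ) =
          (qfac j).map (Int.castRingHom ℚ) * ((X : Polynomial ℚ) ^ (j + 1) - 1) := by
        rw [qfac_succ, Polynomial.map_mul, Polynomial.map_sub, Polynomial.map_pow,
          Polynomial.map_X, Polynomial.map_one]
      by_cases hdvd : d ∣ (j + 1)
      · obtain ⟨h, hh⟩ := cyc_dvd_X_pow_sub_one (d := d) hdvd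
        have hnh : ¬ cyclotomic d ℚ ∣ h := by
          intro hcon
          obtain ⟨e, he⟩ := hcon
          have : cyclotomic d ℚ * cyclotomic d ℚ ∣ (X : Polynomial ℚ) ^ (j + 1) - 1 :=
            ⟨e, by rw [hh, he]; ring⟩
          exact (cyc_prime hd).not_unit (sf_X_pow_sub_one (Nat.succ_pos j) _ this)
        refine ⟨g * h, ?_, ?_⟩
        · rw [hmap, hg, hh, Nat.succ_div, if_pos hdvd, pow_succ]
          ring
        · rw [(cyc_prime hd).dvd_mul]
          tauto
      · refine ⟨g * ((X : Polynomial ℚ) ^ (j + 1) - 1), ?_, ?_⟩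
        · rw [hmap, hg, Nat.succ_div, if_neg hdvd]
          ring
        · rw [(cyc_prime hd).dvd_mul]
          push_neg
          exact ⟨hng, cyc_not_dvd_X_pow_sub_one hd hdvd⟩

lemma div_sum_aux (hd : 0 < d) {m b : ℕ} (hm : d ∣ m) (hb : ¬ d ∣ b) (hbm : b ≤ m) :
    m / d = b / d + (m - b) / d + 1 := by
  have hmb : ¬ d ∣ (m - b) := by
    intro h
    have := Nat.dvd_sub hm h
    rw [Nat.sub_sub_self hbm] at this
    exact hb this
  have hb1 : 0 < b % d := Nat.pos_of_ne_zero fun h => hb (Nat.dvd_of_mod_eq_zero h)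
  have hb2 : 0 < (m - b) % d := Nat.pos_of_ne_zero fun h => hmb (Nat.dvd_of_mod_eq_zero h)
  have l1 : b % d < d := Nat.mod_lt _ hd
  have l2 : (m - b) % d < d := Nat.mod_lt _ hd
  have hd1 : d ∣ (b % d + (m - b) % d) := by
    have h0 : m % d = 0 := Nat.mod_eq_zero_of_dvd hm
    have hsum : (b + (m - b)) % d = 0 := by rw [Nat.add_sub_cancel' hbm]; exact h0
    rw [Nat.add_mod] at hsum
    exact Nat.dvd_of_mod_eq_zero hsum
  obtain ⟨c, hc⟩ := hd1
  have h1 : b % d + (m - b) % d = d := by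
    rcases Nat.lt_or_ge c 2 with h | h
    · interval_cases c <;> omega
    · have : d * 2 ≤ d * c := Nat.mul_le_mul_left d h
      omega
  conv_lhs => rw [show m = b + (m - b) by omega]
  rw [Nat.add_div hd, if_pos (by omega)]

lemma cyclotomic_dvd_qbinom (hd : 0 < d) {m b : ℕ} (hm : d ∣ m) (hb : ¬ d ∣ b) (hbm : b ≤ m) :
    cyclotomic d ℤ ∣ qbinom m b := by
  rw [← map_dvd_map (Int.castRingHom ℚ) Int.cast_injective (cyclotomic.monic d ℤ)]
  rw [map_cyclotomic]
  obtain ⟨g1, hg1, hn1⟩ := qfac_decomp hd b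
  obtain ⟨g2, hg2, hn2⟩ := qfac_decomp hd (m - b)
  obtain ⟨G, hG, hnG⟩ := qfac_decomp hd m
  have key := congrArg (Polynomial.map (Int.castRingHom ℚ)) (qbinom_mul_qfac m b hbm)
  rw [Polynomial.map_mul, Polynomial.map_mul, hg1, hg2, hG, div_sum_aux hd hm hb hbm] at key
  set Q := (qbinom m b).map (Int.castRingHom ℚ)
  set Φ := cyclotomic d ℚ
  have hΦ : Φ ≠ 0 := cyclotomic_ne_zero d ℚ
  have key2 : Φ ^ (b / d + (m - b) / d) * (Q * (g1 * g2)) =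
      Φ ^ (b / d + (m - b) / d) * (Φ * G) := by
    rw [pow_succ] at key
    calc Φ ^ (b / d + (m - b) / d) * (Q * (g1 * g2))
        = Q * (Φ ^ (b / d) * g1 * (Φ ^ ((m - b) / d) * g2)) := by rw [pow_add]; ring
      _ = Φ ^ (b / d + (m - b) / d) * Φ * G := key
      _ = _ := by ring
  have key3 : Q * (g1 * g2) = Φ * G :=
    mul_left_cancel₀ (pow_ne_zero _ hΦ) key2
  have : Φ ∣ Q * (g1 * g2) := ⟨G, key3⟩
  rcases (cyc_prime hd).dvd_mul.mp this with h | h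
  · exact h
  · rcases (cyc_prime hd).dvd_mul.mp h with h' | h' <;> [exact absurd h' hn1; exact absurd h' hn2]

end cyc

lemma mod_helper {h : ℕ} (hh : 0 < h) (k : ℕ) : 2 * h ∣ (h + k) ↔ k % (2 * h) = h := by
  constructor
  · rintro ⟨c, hc⟩
    rcases c with _ | c
    · omega
    · have hk : k = 2 * h * c + h := by rw [Nat.mul_succ] at hc; omega
      rw [hk, Nat.mul_add_mod]
      exact Nat.mod_eq_of_lt (by omega)
  · intro hk
    have := Nat.div_add_mod k (2 * h)
    exact ⟨k / (2 * h) + 1, by rw [Nat.mul_add, Nat.mul_one]; omega⟩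

lemma cyc_dvd_X_pow_sub_one_int {d i : ℕ} (h : d ∣ i) :
    cyclotomic d ℤ ∣ X ^ i - 1 := by
  obtain ⟨c, rfl⟩ := h
  calc cyclotomic d ℤ ∣ X ^ d - 1 := cyclotomic.dvd_X_pow_sub_one d ℤ
    _ ∣ X ^ (d * c) - 1 := by
        have := sub_dvd_pow_sub_pow ((X : Polynomial ℤ) ^ d) 1 c
        rwa [← pow_mul, one_pow] at this

lemma cyc_two_pow (α : ℕ) : cyclotomic (2 ^ (α + 1)) ℤ = 1 + X ^ (2 ^ α) := by
  rw [cyclotomic_prime_pow_eq_geom_sum Nat.prime_two]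
  simp [Finset.sum_range_succ]

lemma cyc_dvd_one_add_X_pow {α k : ℕ} (hk : k % (2 ^ (α + 1)) = 2 ^ α) :
    cyclotomic (2 ^ (α + 1)) ℤ ∣ (1 + X ^ k : Polynomial ℤ) := by
  have hk2 : 2 ^ α ≤ k := by
    rcases Nat.lt_or_ge k (2 ^ α) with h | h
    · have : k % 2 ^ (α + 1) = k := Nat.mod_eq_of_lt (by
        have : (2:ℕ) ^ α < 2 ^ (α + 1) := by
          rw [pow_succ]; omega
        omega)
      omega
    · exact h
  have hdvd : 2 ^ (α + 1) ∣ (k - 2 ^ α) := by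
    have := Nat.div_add_mod k (2 ^ (α + 1))
    exact ⟨k / 2 ^ (α + 1), by omega⟩
  have h1 : cyclotomic (2 ^ (α + 1)) ℤ ∣ X ^ (k - 2 ^ α) - 1 := cyc_dvd_X_pow_sub_one_int hdvd
  have h2 : (1 + X ^ k : Polynomial ℤ) =
      cyclotomic (2 ^ (α + 1)) ℤ + X ^ (2 ^ α) * (X ^ (k - 2 ^ α) - 1) := by
    rw [cyc_two_pow]
    have : (X : Polynomial ℤ) ^ (2 ^ α) * X ^ (k - 2 ^ α) = X ^ k := by
      rw [← pow_add]; congr 1; omega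
    linear_combination -this
  rw [h2]
  exact dvd_add dvd_rfl (Dvd.dvd.mul_left h1 _)

lemma qbinomZ_reflect (N : ℕ) (c k : ℤ) (hc : 2 * c = (N : ℤ)) (h1 : 0 ≤ c + k)
    (h2 : 0 ≤ c - k) : qbinomZ N (c - k) = qbinomZ N (c + k) := by
  unfold qbinomZ
  rw [if_pos h1, if_pos h2]
  have hle : (c + k).toNat ≤ N := by omega
  rw [qbinom_symm hle]
  congr 1
  omega

lemma sq_dvd_helper {Φ a b u v : Polynomial ℤ} (ha : Φ ∣ a) (hb : Φ ∣ b) :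
    Φ ^ 2 ∣ u * a * v * b := by
  obtain ⟨x, hx⟩ := ha; obtain ⟨y, hy⟩ := hb
  exact ⟨u * x * v * y, by rw [hx, hy]; ring⟩

lemma split_lemma (n : ℕ) (Φ2 : Polynomial ℤ) (F : ℤ → Polynomial ℤ)
    (h0 : Φ2 ∣ F 0) (hpair : ∀ k : ℤ, 1 ≤ k → k ≤ n → Φ2 ∣ F k + F (-k)) :
    Φ2 ∣ ∑ k ∈ Finset.Icc (-(n : ℤ)) (n : ℤ), F k := by
  have hunion : Finset.Icc (-(n : ℤ)) (n : ℤ) =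
      Finset.Icc (-(n : ℤ)) (-1) ∪ Finset.Icc 0 (n : ℤ) := by
    ext x; simp only [Finset.mem_Icc, Finset.mem_union]; omega
  have hdisj : Disjoint (Finset.Icc (-(n : ℤ)) (-1)) (Finset.Icc 0 (n : ℤ)) := by
    rw [Finset.disjoint_left]
    intro x hx hx'
    simp only [Finset.mem_Icc] at hx hx'
    omega
  rw [hunion, Finset.sum_union hdisj]
  have h0' : Finset.Icc (0 : ℤ) (n : ℤ) = insert 0 (Finset.Icc 1 (n : ℤ)) := by
    ext x; simp only [Finset.mem_Icc, Finset.mem_insert]; omega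
  rw [h0', Finset.sum_insert (by simp)]
  have hneg : ∑ k ∈ Finset.Icc (-(n : ℤ)) (-1), F k = ∑ k ∈ Finset.Icc (1 : ℤ) (n : ℤ), F (-k) := by
    apply Finset.sum_nbij' (i := fun k => -k) (j := fun k => -k)
    all_goals intro a ha
    all_goals first
      | (simp only [Finset.mem_Icc] at *; omega)
      | simp [neg_neg]
  rw [hneg]
  have : ∑ k ∈ Finset.Icc (1 : ℤ) (n : ℤ), F (-k) + (F 0 + ∑ k ∈ Finset.Icc (1 : ℤ) (n : ℤ), F k)
      = F 0 + ∑ k ∈ Finset.Icc (1 : ℤ) (n : ℤ), (F k + F (-k)) := by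
    rw [Finset.sum_add_distrib]; ring
  rw [this]
  exact dvd_add h0 (Finset.dvd_sum fun k hk => by
    simp only [Finset.mem_Icc] at hk
    exact hpair k hk.1 hk.2)

theorem stmt15 (n r s t : ℕ) (hn : 0 < n) (hr : 0 < r) (hs : 0 < s) (ht : 0 < t) :
    Polynomial.cyclotomic (2 ^ (padicValNat 2 n + 1)) ℤ ^ 2 ∣
      ∑ k ∈ Finset.Icc (-(n : ℤ)) (n : ℤ),
        Polynomial.C (k.negOnePow : ℤ) * X ^ (k * (k - 1) / 2).toNat *
          qbinomZ (6 * n) (3 * (n : ℤ) + k) ^ r *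
          qbinomZ (4 * n) (2 * (n : ℤ) + k) ^ s *
          qbinomZ (2 * n) ((n : ℤ) + k) ^ t := by
  set α := padicValNat 2 n with hα
  have hh : 0 < 2 ^ α := pow_pos (by norm_num) _
  have hd0 : 0 < 2 ^ (α + 1) := pow_pos (by norm_num) _
  have hd2h : 2 ^ (α + 1) = 2 * 2 ^ α := by rw [pow_succ]; ring
  obtain ⟨m, hm⟩ : 2 ^ α ∣ n := pow_padicValNat_dvd
  have hnd : ¬ 2 ^ (α + 1) ∣ n := pow_succ_padicValNat_not_dvd hn.ne'
  have hmodd : m % 2 = 1 := by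
    rcases Nat.even_or_odd m with he | ho
    · obtain ⟨c, hc⟩ := he
      exact absurd ⟨c, by rw [hm, hc, hd2h]; ring⟩ hnd
    · exact Nat.odd_iff.mp ho
  obtain ⟨j, hj⟩ : ∃ j, n = 2 ^ (α + 1) * j + 2 ^ α := by
    obtain ⟨q, hq⟩ : ∃ q, m = 2 * q + 1 := ⟨m / 2, by omega⟩
    exact ⟨q, by rw [hm, hq, hd2h]; ring⟩
  have hd6 : 2 ^ (α + 1) ∣ 6 * n := ⟨6 * j + 3, by rw [hj, hd2h]; ring⟩
  have hd4 : 2 ^ (α + 1) ∣ 4 * n := ⟨4 * j + 2, by rw [hj, hd2h]; ring⟩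
  have hd2 : 2 ^ (α + 1) ∣ 2 * n := ⟨2 * j + 1, by rw [hj, hd2h]; ring⟩
  have keyA : ∀ k' : ℕ, k' % 2 ^ (α + 1) ≠ 2 ^ α → ¬ 2 ^ (α + 1) ∣ (3 * n + k') := by
    intro k' hk hcon
    apply hk
    have e : 3 * n + k' = 2 ^ (α + 1) * (3 * j + 1) + (2 ^ α + k') := by rw [hj, hd2h]; ring
    rw [e] at hcon
    have h1 : 2 ^ (α + 1) ∣ (2 ^ α + k') := (Nat.dvd_add_right (dvd_mul_right _ _)).mp hcon
    rw [hd2h] at h1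
    have h2 := (mod_helper hh k').mp h1
    rw [hd2h]
    exact h2
  have keyA' : ∀ k' : ℕ, k' % 2 ^ (α + 1) ≠ 2 ^ α → ¬ 2 ^ (α + 1) ∣ (n + k') := by
    intro k' hk hcon
    apply hk
    have e : n + k' = 2 ^ (α + 1) * j + (2 ^ α + k') := by rw [hj]; omega
    rw [e] at hcon
    have h1 : 2 ^ (α + 1) ∣ (2 ^ α + k') := (Nat.dvd_add_right (dvd_mul_right _ _)).mp hcon
    rw [hd2h] at h1
    have h2 := (mod_helper hh k').mp h1
    rw [hd2h]
    exact h2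
  have keyB : ∀ k' : ℕ, k' % 2 ^ (α + 1) = 2 ^ α → ¬ 2 ^ (α + 1) ∣ (2 * n + k') := by
    intro k' hk hcon
    have e : 2 * n + k' = 2 ^ (α + 1) * (2 * j + 1) + k' := by rw [hj, hd2h]; ring
    rw [e] at hcon
    have h1 : 2 ^ (α + 1) ∣ k' := (Nat.dvd_add_right (dvd_mul_right _ _)).mp hcon
    have h2 := Nat.mod_eq_zero_of_dvd h1
    omega
  set Φ := cyclotomic (2 ^ (α + 1)) ℤ with hΦ
  apply split_lemma
  · -- k = 0 term
    beta_reduce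
    have e1 : qbinomZ (6 * n) (3 * (n : ℤ) + 0) = qbinom (6 * n) (3 * n) := by
      unfold qbinomZ
      rw [if_pos (by omega)]
      congr 1 <;> omega
    have e2 : qbinomZ (4 * n) (2 * (n : ℤ) + 0) = qbinom (4 * n) (2 * n) := by
      unfold qbinomZ
      rw [if_pos (by omega)]
      congr 1 <;> omega
    have e3 : qbinomZ (2 * n) ((n : ℤ) + 0) = qbinom (2 * n) n := by
      unfold qbinomZ
      rw [if_pos (by omega)]
      congr 1 <;> omega
    rw [e1, e2, e3]
    have h3n : ¬ 2 ^ (α + 1) ∣ 3 * n := by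
      have := keyA 0 (by rw [Nat.zero_mod]; omega)
      simpa using this
    have hA0 : Φ ∣ qbinom (6 * n) (3 * n) := cyclotomic_dvd_qbinom hd0 hd6 h3n (by omega)
    have hC0 : Φ ∣ qbinom (2 * n) n := cyclotomic_dvd_qbinom hd0 hd2 hnd (by omega)
    exact sq_dvd_helper (hA0.trans (dvd_pow_self _ hr.ne')) (hC0.trans (dvd_pow_self _ ht.ne'))
  · -- paired terms
    intro k hk1 hkn
    beta_reduce
    set k' := k.toNat with hk'
    have hkk : (k' : ℤ) = k := Int.toNat_of_nonneg (by omega)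
    have hk'1 : 1 ≤ k' := by omega
    have hk'n : k' ≤ n := by omega
    have eA : qbinomZ (6 * n) (3 * (n : ℤ) + k) = qbinom (6 * n) (3 * n + k') := by
      unfold qbinomZ
      rw [if_pos (by omega)]
      congr 1 <;> omega
    have eB : qbinomZ (4 * n) (2 * (n : ℤ) + k) = qbinom (4 * n) (2 * n + k') := by
      unfold qbinomZ
      rw [if_pos (by omega)]
      congr 1 <;> omega
    have eC : qbinomZ (2 * n) ((n : ℤ) + k) = qbinom (2 * n) (n + k') := by
      unfold qbinomZ
      rw [if_pos (by omega)]
      congr 1 <;> omega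
    have eA' : qbinomZ (6 * n) (3 * (n : ℤ) + -k) = qbinom (6 * n) (3 * n + k') := by
      rw [show 3 * (n : ℤ) + -k = 3 * (n : ℤ) - k by ring,
        qbinomZ_reflect (6 * n) (3 * (n : ℤ)) k (by push_cast; ring) (by omega) (by omega), eA]
    have eB' : qbinomZ (4 * n) (2 * (n : ℤ) + -k) = qbinom (4 * n) (2 * n + k') := by
      rw [show 2 * (n : ℤ) + -k = 2 * (n : ℤ) - k by ring,
        qbinomZ_reflect (4 * n) (2 * (n : ℤ)) k (by push_cast; ring) (by omega) (by omega), eB]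
    have eC' : qbinomZ (2 * n) ((n : ℤ) + -k) = qbinom (2 * n) (n + k') := by
      rw [show (n : ℤ) + -k = (n : ℤ) - k by ring,
        qbinomZ_reflect (2 * n) ((n : ℤ)) k (by push_cast; ring) (by omega) (by omega), eC]
    have ecoef : (((-k).negOnePow : ℤ)) = ((k.negOnePow : ℤ)) := by rw [Int.negOnePow_neg]
    have hq : (-k) * (-k - 1) = k * (k - 1) + k * 2 := by ring
    have ediv : (-k) * (-k - 1) / 2 = k * (k - 1) / 2 + k := by
      rw [hq, Int.add_mul_ediv_right _ _ two_ne_zero]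
    have hpos : 0 ≤ k * (k - 1) / 2 :=
      Int.ediv_nonneg (mul_nonneg (by omega) (by omega)) (by norm_num)
    have eexp : ((-k) * (-k - 1) / 2).toNat = (k * (k - 1) / 2).toNat + k' := by omega
    rw [eA, eB, eC, eA', eB', eC', ecoef, eexp, pow_add]
    by_cases hcase : k' % 2 ^ (α + 1) = 2 ^ α
    · have h1 : Φ ∣ (1 + X ^ k' : Polynomial ℤ) := cyc_dvd_one_add_X_pow hcase
      have h2 : Φ ∣ qbinom (4 * n) (2 * n + k') ^ s :=
        (cyclotomic_dvd_qbinom hd0 hd4 (keyB k' hcase) (by omega)).trans (dvd_pow_self _ hs.ne')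
      obtain ⟨u, hu⟩ := h1
      obtain ⟨v, hv⟩ := h2
      refine ⟨C ((k.negOnePow : ℤ)) * X ^ ((k * (k - 1) / 2).toNat) *
        (u * (qbinom (6 * n) (3 * n + k') ^ r * v * qbinom (2 * n) (n + k') ^ t)), ?_⟩
      linear_combination (C ((k.negOnePow : ℤ)) * X ^ ((k * (k - 1) / 2).toNat) *
          qbinom (6 * n) (3 * n + k') ^ r * qbinom (2 * n) (n + k') ^ t *
          qbinom (4 * n) (2 * n + k') ^ s) * hu +
        (C ((k.negOnePow : ℤ)) * X ^ ((k * (k - 1) / 2).toNat) *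
          qbinom (6 * n) (3 * n + k') ^ r * qbinom (2 * n) (n + k') ^ t * Φ * u) * hv
    · have h1 : Φ ∣ qbinom (6 * n) (3 * n + k') ^ r :=
        (cyclotomic_dvd_qbinom hd0 hd6 (keyA k' hcase) (by omega)).trans (dvd_pow_self _ hr.ne')
      have h2 : Φ ∣ qbinom (2 * n) (n + k') ^ t :=
        (cyclotomic_dvd_qbinom hd0 hd2 (keyA' k' hcase) (by omega)).trans (dvd_pow_self _ ht.ne')
      obtain ⟨u, hu⟩ := h1
      obtain ⟨v, hv⟩ := h2
      refine ⟨C ((k.negOnePow : ℤ)) * X ^ ((k * (k - 1) / 2).toNat) *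
        ((1 + X ^ k') * (u * qbinom (4 * n) (2 * n + k') ^ s * v)), ?_⟩
      linear_combination (C ((k.negOnePow : ℤ)) * X ^ ((k * (k - 1) / 2).toNat) *
          (1 + X ^ k') * qbinom (4 * n) (2 * n + k') ^ s * qbinom (2 * n) (n + k') ^ t) * hu +
        (C ((k.negOnePow : ℤ)) * X ^ ((k * (k - 1) / 2).toNat) *
          (1 + X ^ k') * qbinom (4 * n) (2 * n + k') ^ s * Φ * u) * hv
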